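/- Let c be a real number, define the kernel k(x,y) := sin(c(x−y))/(π(x−y)) for x ≠ y and k(x,x) := c/π, and for f twice continuously differentiable on [−1,1] define (Kf)(x) := ∫_{−1}^{1} k(x,y) f(y) dy and (Lf)(x) := d/dx[ (x² − 1) f′(x) ] + c² x² f(x). Then the integral operator K commutes with the differential operator L: for every f ∈ C²([−1,1]) and every x ∈ [−1,1], ∫_{−1}^{1} k(x,y) (Lf)(y) dy = (L(Kf))(x). -/

import Mathlib

open Real MeasureTheory intervalIntegral

/-- The sine-type kernel `k(x,y) = sin(c(x-y))/(π(x-y))`, with `k(x,x) = c/π`. -/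
noncomputable def sincKernel (c : ℝ) (x y : ℝ) : ℝ :=
  if x = y then c / π else Real.sin (c * (x - y)) / (π * (x - y))

/-- The prolate spheroidal differential operator
`(Lf)(x) = d/dx[(x²-1)f'(x)] + c²x²f(x)` on `[-1,1]` (derivatives taken within `[-1,1]`). -/
noncomputable def prolateOp (c : ℝ) (f : ℝ → ℝ) (x : ℝ) : ℝ :=
  derivWithin (fun t => (t ^ 2 - 1) * derivWithin f (Set.Icc (-1) 1) t) (Set.Icc (-1) 1) x
    + c ^ 2 * x ^ 2 * f x


/-!
Write `k(x, y) = S(x - y)` with `S u = (c / π) sinc (c u)`, a smooth function. Because the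
coefficient `y² - 1` of `L` vanishes at `±1`, two integrations by parts show that `L` is symmetric,
`∫ φ · Lf = ∫ Lφ · f` for smooth `φ`, without boundary terms. Differentiating under the integral
sign gives `L(Kf)(x) = ∫ L_x k(x, y) f(y) dy`. Finally `L_x k(x, y) = L_y k(x, y)`: the difference
is `(x + y) (u S'' + 2 S' + c² u S)` at `u = x - y`, which vanishes since `u S u = sin (c u) / π`
gives `(u S)'' = -c² u S`.
-/

open Set

namespace Real

theorem analyticAt_sinc (x : ℝ) : AnalyticAt ℝ sinc x := by
  rcases eq_or_ne x 0 with rfl | hx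
  · obtain ⟨p, hp⟩ := analyticAt_sin (x := (0 : ℝ))
    rw [sinc_eq_dslope]
    exact ⟨_, hp.has_fpower_series_dslope_fslope⟩
  · refine (analyticAt_sin.div analyticAt_id hx).congr ?_
    filter_upwards [eventually_ne_nhds hx] with y hy
    simp [sinc_of_ne_zero hy]

theorem contDiff_sinc {n : WithTop ℕ∞} : ContDiff ℝ n sinc :=
  AnalyticOnNhd.contDiff fun x _ => analyticAt_sinc x

end Real

noncomputable def sincProfile (c u : ℝ) : ℝ := c / π * sinc (c * u)

theorem sincKernel_eq_sincProfile (c x y : ℝ) : sincKernel c x y = sincProfile c (x - y) := by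
  unfold sincKernel sincProfile
  split_ifs with h
  · simp [h]
  rcases eq_or_ne c 0 with rfl | hc
  · simp
  rw [sinc_of_ne_zero (mul_ne_zero hc (sub_ne_zero.2 h))]
  have : x - y ≠ 0 := sub_ne_zero.2 h
  field_simp

theorem contDiff_sincProfile (c : ℝ) {n : WithTop ℕ∞} : ContDiff ℝ n (sincProfile c) :=
  contDiff_const.mul (contDiff_sinc.comp (contDiff_const.mul contDiff_id))

theorem mul_sincProfile (c u : ℝ) : u * sincProfile c u = sin (c * u) / π := by
  unfold sincProfile
  rcases eq_or_ne (c * u) 0 with h | h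
  · rcases mul_eq_zero.1 h with rfl | rfl <;> simp
  rw [sinc_of_ne_zero h]
  have : c ≠ 0 := left_ne_zero_of_mul h
  have : u ≠ 0 := right_ne_zero_of_mul h
  field_simp

theorem sincProfile_ode (c u : ℝ) :
    u * deriv (deriv (sincProfile c)) u + 2 * deriv (sincProfile c) u
      + c ^ 2 * (u * sincProfile c u) = 0 := by
  set S := sincProfile c
  have hS : ContDiff ℝ 2 S := contDiff_sincProfile c
  have dS : ∀ u, HasDerivAt S (deriv S u) u := fun u =>
    (hS.differentiable two_ne_zero u).hasDerivAt
  have dS' : ∀ u, HasDerivAt (deriv S) (deriv (deriv S) u) u := fun u =>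
    (hS.deriv'.differentiable one_ne_zero u).hasDerivAt
  have h₁ : ∀ u, S u + u * deriv S u = c * cos (c * u) / π := by
    intro u
    have h : HasDerivAt (fun u => u * S u) (c * cos (c * u) / π) u := by
      rw [funext (mul_sincProfile c)]
      simpa [mul_comm] using
        ((hasDerivAt_sin (c * u)).comp u ((hasDerivAt_id' u).const_mul c)).div_const π
    linear_combination ((hasDerivAt_id' u).mul (dS u)).unique h
  have h₂ : HasDerivAt (fun u => S u + u * deriv S u) (-c ^ 2 * sin (c * u) / π) u := by
    rw [funext h₁]
    simpa [mul_comm, mul_left_comm, sq, mul_assoc] using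
      (((hasDerivAt_cos (c * u)).comp u ((hasDerivAt_id' u).const_mul c)).const_mul c).div_const π
  linear_combination
    ((dS u).add ((hasDerivAt_id' u).mul (dS' u))).unique h₂ + c ^ 2 * mul_sincProfile c u

theorem prolateOp_eq_of_hasDerivAt (c : ℝ) {φ φ' φ'' : ℝ → ℝ}
    (hφ : ∀ t ∈ Icc (-1 : ℝ) 1, HasDerivAt φ (φ' t) t)
    (hφ' : ∀ t ∈ Icc (-1 : ℝ) 1, HasDerivAt φ' (φ'' t) t) {x : ℝ} (hx : x ∈ Icc (-1 : ℝ) 1) :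
    prolateOp c φ x = (x ^ 2 - 1) * φ'' x + 2 * x * φ' x + c ^ 2 * x ^ 2 * φ x := by
  have hU : UniqueDiffOn ℝ (Icc (-1 : ℝ) 1) := uniqueDiffOn_Icc (by norm_num)
  have hderiv : ∀ t ∈ Icc (-1 : ℝ) 1, derivWithin φ (Icc (-1) 1) t = φ' t := fun t ht =>
    (hφ t ht).hasDerivWithinAt.derivWithin (hU t ht)
  have hflux : HasDerivAt (fun t => (t ^ 2 - 1) * φ' t)
      (2 * x * φ' x + (x ^ 2 - 1) * φ'' x) x :=
    (((hasDerivAt_pow 2 x).sub_const 1).mul (hφ' x hx)).congr_deriv (by push_cast; ring)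
  rw [prolateOp, derivWithin_congr (f := fun t => (t ^ 2 - 1) * φ' t)
      (fun t ht => by simp only [hderiv t ht]) (by simp only [hderiv x hx]),
    hflux.hasDerivWithinAt.derivWithin (hU x hx)]
  ring

theorem intervalIntegrable_comp_sub_mul {G f : ℝ → ℝ} {a b : ℝ} (hG : Continuous G)
    (hf : ContinuousOn f (uIcc a b)) (x : ℝ) :
    IntervalIntegrable (fun y => G (x - y) * f y) volume a b :=
  ((hG.comp (continuous_const.sub continuous_id)).continuousOn.mul hf).intervalIntegrable

theorem hasDerivAt_integral_comp_sub_mul {G f : ℝ → ℝ} {a b : ℝ} (hG : ContDiff ℝ 1 G)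
    (hf : ContinuousOn f (uIcc a b)) (x : ℝ) :
    HasDerivAt (fun t => ∫ y in a..b, G (t - y) * f y) (∫ y in a..b, deriv G (x - y) * f y) x := by
  have hG' : Continuous (deriv G) := hG.continuous_deriv_one
  obtain ⟨C, hC⟩ := ((isCompact_closedBall x 1).prod isCompact_uIcc).exists_bound_of_continuousOn
    (hG'.comp (continuous_fst.sub continuous_snd)).continuousOn
  have hf_meas : AEStronglyMeasurable f (volume.restrict (uIoc a b)) :=
    (hf.mono uIoc_subset_uIcc).aestronglyMeasurable measurableSet_uIoc
  refine (hasDerivAt_integral_of_dominated_loc_of_deriv_le (F := fun t y => G (t - y) * f y)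
    (F' := fun t y => deriv G (t - y) * f y) (bound := fun y => C * ‖f y‖)
    (Metric.ball_mem_nhds x one_pos) (.of_forall fun t => ?_)
    (intervalIntegrable_comp_sub_mul hG.continuous hf x) ?_ ?_ ?_ ?_).2
  · exact (hG.continuous.comp (continuous_const.sub continuous_id)).aestronglyMeasurable.mul
      hf_meas
  · exact (hG'.comp (continuous_const.sub continuous_id)).aestronglyMeasurable.mul hf_meas
  · refine .of_forall fun y hy t ht => ?_
    rw [norm_mul]
    exact mul_le_mul_of_nonneg_right
      (hC (t, y) ⟨Metric.ball_subset_closedBall ht, uIoc_subset_uIcc hy⟩) (norm_nonneg _)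
  · exact (hf.norm.const_smul C).intervalIntegrable
  · exact .of_forall fun y _ t _ =>
      ((hG.differentiable one_ne_zero (t - y)).hasDerivAt.comp_sub_const t y).mul_const (f y)

theorem prolateOp_integral_comp_sub_mul (c : ℝ) {G f : ℝ → ℝ} (hG : ContDiff ℝ 2 G)
    (hf : ContinuousOn f (Icc (-1) 1)) {x : ℝ} (hx : x ∈ Icc (-1 : ℝ) 1) :
    prolateOp c (fun t => ∫ y in (-1 : ℝ)..1, G (t - y) * f y) x
      = ∫ y in (-1 : ℝ)..1, prolateOp c (fun t => G (t - y)) x * f y := by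
  rw [← uIcc_of_le (by norm_num : (-1 : ℝ) ≤ 1)] at hf
  have hG' : ContDiff ℝ 1 (deriv G) := hG.deriv'
  have dG : ∀ u, HasDerivAt G (deriv G u) u := fun u =>
    (hG.differentiable two_ne_zero u).hasDerivAt
  have dG' : ∀ u, HasDerivAt (deriv G) (deriv (deriv G) u) u := fun u =>
    (hG'.differentiable one_ne_zero u).hasDerivAt
  have hkernel : ∀ y, prolateOp c (fun t => G (t - y)) x = (x ^ 2 - 1) * deriv (deriv G) (x - y)
      + 2 * x * deriv G (x - y) + c ^ 2 * x ^ 2 * G (x - y) := fun y =>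
    prolateOp_eq_of_hasDerivAt c (fun t _ => (dG _).comp_sub_const t y)
      (fun t _ => (dG' _).comp_sub_const t y) hx
  have hint : ∀ {H : ℝ → ℝ}, Continuous H →
      IntervalIntegrable (fun y => H (x - y) * f y) volume (-1) 1 := fun hH =>
    intervalIntegrable_comp_sub_mul hH hf x
  have hG'' : Continuous (deriv (deriv G)) := hG'.continuous_deriv_one
  rw [prolateOp_eq_of_hasDerivAt c
    (fun t _ => hasDerivAt_integral_comp_sub_mul (hG.of_le one_le_two) hf t)
    (fun t _ => hasDerivAt_integral_comp_sub_mul hG' hf t) hx]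
  symm
  calc ∫ y in (-1 : ℝ)..1, prolateOp c (fun t => G (t - y)) x * f y
      = ∫ y in (-1 : ℝ)..1, (x ^ 2 - 1) * (deriv (deriv G) (x - y) * f y)
          + 2 * x * (deriv G (x - y) * f y) + c ^ 2 * x ^ 2 * (G (x - y) * f y) :=
        integral_congr fun y _ => by rw [hkernel]; ring
    _ = _ := by
      rw [integral_add (((hint hG'').const_mul _).add ((hint hG'.continuous).const_mul _))
          ((hint hG.continuous).const_mul _),
        integral_add ((hint hG'').const_mul _) ((hint hG'.continuous).const_mul _),
        intervalIntegral.integral_const_mul, intervalIntegral.integral_const_mul,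
        intervalIntegral.integral_const_mul]

theorem integral_mul_derivWithin_flux {φ f : ℝ → ℝ} (hφ : ContDiff ℝ 2 φ)
    (hf : ContDiffOn ℝ 2 f (Icc (-1) 1)) :
    ∫ y in (-1 : ℝ)..1, φ y * derivWithin (fun t => (t ^ 2 - 1) * derivWithin f (Icc (-1) 1) t)
        (Icc (-1) 1) y
      = ∫ y in (-1 : ℝ)..1, ((y ^ 2 - 1) * deriv (deriv φ) y + 2 * y * deriv φ y) * f y := by
  have hI : uIcc (-1 : ℝ) 1 = Icc (-1) 1 := uIcc_of_le (by norm_num)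
  have hU : UniqueDiffOn ℝ (Icc (-1 : ℝ) 1) := uniqueDiffOn_Icc (by norm_num)
  have hderiv : ∀ {h : ℝ → ℝ}, ContDiffOn ℝ 1 h (Icc (-1) 1) → ∀ t ∈ uIcc (-1 : ℝ) 1,
      HasDerivWithinAt h (derivWithin h (Icc (-1) 1) t) (uIcc (-1) 1) t := fun hh t ht => by
    rw [hI] at ht ⊢
    exact (hh.differentiableOn one_ne_zero t ht).hasDerivWithinAt
  set f' := derivWithin f (Icc (-1 : ℝ) 1)
  have hf' : ContDiffOn ℝ 1 f' (Icc (-1) 1) := hf.derivWithin hU (by norm_num)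
  have hflux : ContDiffOn ℝ 1 (fun t => (t ^ 2 - 1) * f' t) (Icc (-1) 1) :=
    ((contDiff_id.pow 2).sub contDiff_const).contDiffOn.mul hf'
  have hφ' : ContDiff ℝ 1 (deriv φ) := hφ.deriv'
  have hφ'' : Continuous (deriv (deriv φ)) := hφ'.continuous_deriv_one
  have dφ : ∀ t, HasDerivAt φ (deriv φ t) t := fun t =>
    (hφ.differentiable two_ne_zero t).hasDerivAt
  have dψ : ∀ t, HasDerivAt (fun t => (t ^ 2 - 1) * deriv φ t)
      (2 * t * deriv φ t + (t ^ 2 - 1) * deriv (deriv φ) t) t := fun t =>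
    (((hasDerivAt_pow 2 t).sub_const 1).mul
      (hφ'.differentiable one_ne_zero t).hasDerivAt).congr_deriv (by push_cast; ring)
  -- both boundary terms carry the factor `t ^ 2 - 1`, which vanishes at `t = ±1`
  calc _ = -∫ y in (-1 : ℝ)..1, deriv φ y * ((y ^ 2 - 1) * f' y) := by
        rw [integral_mul_deriv_eq_deriv_mul_of_hasDerivWithinAt
          (fun t _ => (dφ t).hasDerivWithinAt) (hderiv hflux)
          (hφ'.continuous.intervalIntegrable _ _)
          ((hflux.continuousOn_derivWithin hU le_rfl).intervalIntegrable_of_Icc (by norm_num))]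
        norm_num
    _ = -∫ y in (-1 : ℝ)..1, (y ^ 2 - 1) * deriv φ y * f' y := by
        congr 1
        exact integral_congr fun y _ => by ring
    _ = ∫ y in (-1 : ℝ)..1, (2 * y * deriv φ y + (y ^ 2 - 1) * deriv (deriv φ) y) * f y := by
        rw [integral_mul_deriv_eq_deriv_mul_of_hasDerivWithinAt
          (fun t _ => (dψ t).hasDerivWithinAt) (hderiv (hf.of_le one_le_two))
          ((by fun_prop : Continuous _).intervalIntegrable _ _)
          (hf'.continuousOn.intervalIntegrable_of_Icc (by norm_num))]
        norm_num
    _ = _ := integral_congr fun y _ => by ring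

theorem integral_mul_prolateOp (c : ℝ) {φ f : ℝ → ℝ} (hφ : ContDiff ℝ 2 φ)
    (hf : ContDiffOn ℝ 2 f (Icc (-1) 1)) :
    ∫ y in (-1 : ℝ)..1, φ y * prolateOp c f y = ∫ y in (-1 : ℝ)..1, prolateOp c φ y * f y := by
  have hI : uIcc (-1 : ℝ) 1 = Icc (-1) 1 := uIcc_of_le (by norm_num)
  have hU : UniqueDiffOn ℝ (Icc (-1 : ℝ) 1) := uniqueDiffOn_Icc (by norm_num)
  have hφ' : ContDiff ℝ 1 (deriv φ) := hφ.deriv'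
  have hφ'' : Continuous (deriv (deriv φ)) := hφ'.continuous_deriv_one
  have hfc : ContinuousOn f (Icc (-1) 1) := hf.continuousOn
  have hflux' : ContinuousOn
      (derivWithin (fun t => (t ^ 2 - 1) * derivWithin f (Icc (-1) 1) t) (Icc (-1) 1))
      (Icc (-1) 1) :=
    (((contDiff_id.pow 2).sub contDiff_const).contDiffOn.mul
      (hf.derivWithin hU le_rfl)).continuousOn_derivWithin hU le_rfl
  have hpotential : IntervalIntegrable (fun y => c ^ 2 * y ^ 2 * φ y * f y) volume (-1) 1 :=
    ((by fun_prop : Continuous fun y => c ^ 2 * y ^ 2 * φ y).continuousOn.mul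
      hfc).intervalIntegrable_of_Icc (by norm_num)
  calc _ = (∫ y in (-1 : ℝ)..1, φ y * derivWithin
          (fun t => (t ^ 2 - 1) * derivWithin f (Icc (-1) 1) t) (Icc (-1) 1) y)
        + ∫ y in (-1 : ℝ)..1, c ^ 2 * y ^ 2 * φ y * f y := by
        rw [← integral_add ?_ hpotential]
        · exact integral_congr fun y _ => by rw [prolateOp]; ring
        · exact (hφ.continuous.continuousOn.mul hflux').intervalIntegrable_of_Icc (by norm_num)
    _ = (∫ y in (-1 : ℝ)..1, ((y ^ 2 - 1) * deriv (deriv φ) y + 2 * y * deriv φ y) * f y)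
        + ∫ y in (-1 : ℝ)..1, c ^ 2 * y ^ 2 * φ y * f y := by
        rw [integral_mul_derivWithin_flux hφ hf]
    _ = _ := by
        rw [← integral_add ?_ hpotential]
        · refine integral_congr fun y hy => ?_
          rw [prolateOp_eq_of_hasDerivAt c
            (fun t _ => (hφ.differentiable two_ne_zero t).hasDerivAt)
            (fun t _ => (hφ'.differentiable one_ne_zero t).hasDerivAt) (hI ▸ hy)]
          ring
        · exact ((by fun_prop : Continuous _).continuousOn.mul hfc).intervalIntegrable_of_Icc
            (by norm_num)

theorem prolateOp_comp_sub_eq_of_ode (c : ℝ) {G : ℝ → ℝ} (hG : ContDiff ℝ 2 G)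
    (hode : ∀ u, u * deriv (deriv G) u + 2 * deriv G u + c ^ 2 * (u * G u) = 0)
    {x y : ℝ} (hx : x ∈ Icc (-1 : ℝ) 1) (hy : y ∈ Icc (-1 : ℝ) 1) :
    prolateOp c (fun t => G (t - y)) x = prolateOp c (fun t => G (x - t)) y := by
  have dG : ∀ u, HasDerivAt G (deriv G u) u := fun u =>
    (hG.differentiable two_ne_zero u).hasDerivAt
  have dG' : ∀ u, HasDerivAt (deriv G) (deriv (deriv G) u) u := fun u =>
    (hG.deriv'.differentiable one_ne_zero u).hasDerivAt
  rw [prolateOp_eq_of_hasDerivAt c (fun t _ => (dG _).comp_sub_const t y)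
      (fun t _ => (dG' _).comp_sub_const t y) hx,
    prolateOp_eq_of_hasDerivAt c (φ' := fun t => -deriv G (x - t))
      (fun t _ => (dG _).comp_const_sub x t)
      (fun t _ => ((dG' _).comp_const_sub x t).neg.congr_deriv (neg_neg _)) hy]
  linear_combination (x + y) * hode (x - y)

theorem sine_kernel_commutes_with_prolate (c : ℝ) (f : ℝ → ℝ)
    (hf : ContDiffOn ℝ 2 f (Set.Icc (-1) 1)) :
    ∀ x ∈ Set.Icc (-1 : ℝ) 1,
      ∫ y in (-1 : ℝ)..1, sincKernel c x y * prolateOp c f y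
        = prolateOp c (fun t => ∫ y in (-1 : ℝ)..1, sincKernel c t y * f y) x := by
  intro x hx
  have hS : ContDiff ℝ 2 (sincProfile c) := contDiff_sincProfile c
  have hk : sincKernel c x = fun t => sincProfile c (x - t) :=
    funext (sincKernel_eq_sincProfile c x)
  calc _ = ∫ y in (-1 : ℝ)..1, prolateOp c (sincKernel c x) y * f y :=
        integral_mul_prolateOp c (hk ▸ hS.comp (contDiff_const.sub contDiff_id)) hf
    _ = ∫ y in (-1 : ℝ)..1, prolateOp c (fun t => sincProfile c (t - y)) x * f y := by
        refine integral_congr fun y hy => ?_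
        rw [hk, prolateOp_comp_sub_eq_of_ode c hS (sincProfile_ode c) hx
          (uIcc_of_le (by norm_num : (-1 : ℝ) ≤ 1) ▸ hy)]
    _ = _ := by
        simp_rw [sincKernel_eq_sincProfile]
        exact (prolateOp_integral_comp_sub_mul c hS hf.continuousOn hx).symm
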